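/- Let A be a Hopf algebra over a commutative ring k with comultiplication Δ (an algebra homomorphism A → A⊗A) and counit ε, and let ψ : A → k be a right-invariant k-linear functional, i.e. (ψ⊗id)(Δ(a)) = ψ(a)·1 for all a ∈ A, where (ψ⊗id) : A⊗A → A is the induced linear map. Let z be a central element of A with (1⊗z)·Δ(z) = z⊗z, let g ∈ A be group-like (Δ(g) = g⊗g), and let c ∈ A and λ ∈ k be arbitrary. Set W = (ψ⊗id)((g·z ⊗ g)·Δ(c)) − λ·1. Then (z⊗1)·Δ(W) = z⊗W in A⊗A. -/
import Mathlib


open TensorProduct Coalgebra Bialgebra HopfAlgebra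

/-- The linear map `ψ ⊗ id : A ⊗ A → A`, sending `a ⊗ b` to `ψ(a) • b`. -/
noncomputable def psiTensorId {k A : Type*} [CommRing k] [Ring A] [Algebra k A]
    (ψ : A →ₗ[k] k) : A ⊗[k] A →ₗ[k] A :=
  TensorProduct.lift ((LinearMap.lsmul k A).comp ψ)

section Aux

variable {k A : Type*} [CommRing k] [Ring A] [Algebra k A]

@[simp] lemma psiTensorId_tmul (ψ : A →ₗ[k] k) (a b : A) :
    psiTensorId ψ (a ⊗ₜ[k] b) = ψ a • b := rfl

lemma psiTensorId_one_tmul_mul (ψ : A →ₗ[k] k) (x : A) (u : A ⊗[k] A) :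
    psiTensorId ψ (((1 : A) ⊗ₜ[k] x) * u) = x * psiTensorId ψ u := by
  induction u using TensorProduct.induction_on with
  | zero => simp
  | tmul a b => simp [Algebra.TensorProduct.tmul_mul_tmul, mul_smul_comm]
  | add u v hu hv => simp [mul_add, hu, hv]

end Aux

section Core

variable {k A : Type*} [CommRing k] [Ring A] [HopfAlgebra k A]

lemma key_smul (ψ : A →ₗ[k] k)
    (hinv : ∀ a : A, psiTensorId ψ (comul (R := k) a) = ψ a • (1 : A))
    (z : A) (hzc : ∀ x : A, z * x = x * z)
    (hΔz : ((1 : A) ⊗ₜ[k] z) * comul (R := k) z = z ⊗ₜ[k] z)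
    (g : A) (hg : comul (R := k) g = g ⊗ₜ[k] g) (a : A) :
    psiTensorId ψ (((g * z) ⊗ₜ[k] (z * g)) * comul (R := k) a)
      = ψ (z * (g * a)) • z := by
  have h1 : ((g * z) ⊗ₜ[k] (z * g)) * comul (R := k) a
      = ((1 : A) ⊗ₜ[k] z) * comul (R := k) (z * (g * a)) := by
    rw [comul_mul, comul_mul, hg, ← mul_assoc, hΔz, ← mul_assoc,
      Algebra.TensorProduct.tmul_mul_tmul, ← hzc g]
  rw [h1, psiTensorId_one_tmul_mul, hinv, mul_smul_comm, mul_one]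

lemma core (ψ : A →ₗ[k] k)
    (hinv : ∀ a : A, psiTensorId ψ (comul (R := k) a) = ψ a • (1 : A))
    (z : A) (hzc : ∀ x : A, z * x = x * z)
    (hΔz : ((1 : A) ⊗ₜ[k] z) * comul (R := k) z = z ⊗ₜ[k] z)
    (g : A) (hg : comul (R := k) g = g ⊗ₜ[k] g) (c : A) :
    (z ⊗ₜ[k] (1 : A)) * comul (R := k)
        (psiTensorId ψ (((g * z) ⊗ₜ[k] g) * comul (R := k) c))
      = z ⊗ₜ[k] psiTensorId ψ (((g * z) ⊗ₜ[k] g) * comul (R := k) c) := by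
  -- linear maps
  set L : A ⊗[k] A →ₗ[k] A ⊗[k] A :=
    (LinearMap.mulLeft k (z ⊗ₜ[k] (1 : A))) ∘ₗ comul ∘ₗ (psiTensorId ψ) ∘ₗ
      LinearMap.mulLeft k ((g * z) ⊗ₜ[k] g) with hL
  set Rt : A ⊗[k] A →ₗ[k] A ⊗[k] A :=
    (TensorProduct.mk k A A z) ∘ₗ (psiTensorId ψ) ∘ₗ
      LinearMap.mulLeft k ((g * z) ⊗ₜ[k] g) with hRt
  set F : A ⊗[k] (A ⊗[k] A) →ₗ[k] A ⊗[k] A :=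
    (LinearMap.mulLeft k ((z * g) ⊗ₜ[k] g)) ∘ₗ
      TensorProduct.lift ((LinearMap.lsmul k (A ⊗[k] A)).comp
        (ψ ∘ₗ LinearMap.mulLeft k (g * z))) with hF
  set G : (A ⊗[k] A) ⊗[k] A →ₗ[k] A ⊗[k] A :=
    TensorProduct.map
      ((psiTensorId ψ) ∘ₗ LinearMap.mulLeft k ((g * z) ⊗ₜ[k] (z * g)))
      (LinearMap.mulLeft k g) with hG
  have step1 : L = F ∘ₗ LinearMap.lTensor A (comul (R := k)) := by
    apply TensorProduct.ext'
    intro a b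
    simp only [hL, hF, LinearMap.coe_comp, Function.comp_apply,
      LinearMap.lTensor_tmul, LinearMap.mulLeft_apply, lift.tmul,
      LinearMap.lsmul_apply, psiTensorId_tmul, comul_mul, hg, map_smul,
      LinearMap.smul_apply, LinearMap.id_apply,
      Algebra.TensorProduct.tmul_mul_tmul]
    rw [← mul_assoc, Algebra.TensorProduct.tmul_mul_tmul, one_mul]
  have step2 : F ∘ₗ (TensorProduct.assoc k A A A).toLinearMap = G := by
    apply TensorProduct.ext_threefold
    intro a b d
    simp [hF, hG, Algebra.TensorProduct.tmul_mul_tmul, mul_smul_comm,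
      TensorProduct.smul_tmul', mul_assoc]
  have step3 : G ∘ₗ LinearMap.rTensor A (comul (R := k)) = Rt := by
    apply TensorProduct.ext'
    intro a b
    simp only [hG, hRt, LinearMap.coe_comp, Function.comp_apply,
      LinearMap.rTensor_tmul, TensorProduct.map_tmul, LinearMap.mulLeft_apply,
      TensorProduct.mk_apply]
    rw [key_smul ψ hinv z hzc hΔz g hg a]
    have hsc : ψ (z * (g * a)) = ψ (g * z * a) := by rw [← mul_assoc, hzc g]
    rw [hsc, Algebra.TensorProduct.tmul_mul_tmul, psiTensorId_tmul]
    simp [TensorProduct.smul_tmul']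
  have : L (comul c) = Rt (comul c) := by
    rw [step1]
    have hco : LinearMap.lTensor A (comul (R := k)) (comul c)
        = TensorProduct.assoc k A A A
            (LinearMap.rTensor A (comul (R := k)) (comul c)) :=
      (Coalgebra.coassoc_apply c).symm
    simp only [LinearMap.coe_comp, Function.comp_apply, hco]
    rw [← step3]
    simp only [← step2, LinearMap.coe_comp, Function.comp_apply,
      LinearEquiv.coe_coe]
  simpa [hL, hRt] using this

end Core

/-- Key identity from the proof of Proposition 3.2 (unital case, two tensor
factors): for a right-invariant `ψ`, a central `z` with `(1⊗z)Δ(z) = z⊗z`, a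
group-like `g`, and `W = (ψ⊗id)((gz⊗g)Δ(c)) − λ·1`, one has
`(z⊗1)·Δ(W) = z ⊗ W`. -/
theorem z_tensor_comul_W {k A : Type*} [CommRing k] [Ring A] [HopfAlgebra k A]
    (ψ : A →ₗ[k] k)
    (hinv : ∀ a : A, psiTensorId ψ (comul (R := k) a) = ψ a • (1 : A))
    (z : A) (hzc : ∀ x : A, z * x = x * z)
    (hΔz : ((1 : A) ⊗ₜ[k] z) * comul (R := k) z = z ⊗ₜ[k] z)
    (g : A) (hg : comul (R := k) g = g ⊗ₜ[k] g)
    (c : A) (lam : k)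
    (W : A)
    (hW : W = psiTensorId ψ (((g * z) ⊗ₜ[k] g) * comul (R := k) c) - lam • (1 : A)) :
    (z ⊗ₜ[k] (1 : A)) * comul (R := k) W = z ⊗ₜ[k] W := by
  subst hW
  rw [map_sub, map_smul, Bialgebra.comul_one, mul_sub,
    TensorProduct.tmul_sub, TensorProduct.tmul_smul]
  rw [core ψ hinv z hzc hΔz g hg c]
  congr 1
  rw [mul_smul_comm, mul_one, ← TensorProduct.tmul_smul]
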